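/- arXiv:2008.06642 — 2 statements merged into one kernel-verified Lean document; each statement's English description precedes it below -/
import Mathlib

section
/- (Theorem 1, square array case.) Let (Ω, μ) be a probability space, V : Ω → ℝ measurable, and let r_pool, r_ind : ℝ → [0,1] be measurable nondecreasing functions. Under the correlated-errors model, in which the row pooled test, column pooled test, and follow-up individual test outcomes of a true positive sample are conditionally independent given its viral load V, with conditional success probabilities r_pool(V), r_pool(V), and r_ind(V) respectively, the probability that the true positive is declared negative is 1 − E[r_pool(V)²·r_ind(V)]. Under the alternative model with unconditionally independent test errors it is 1 − E[r_pool(V)]²·E[r_ind(V)]. Then 1 − E[r_pool(V)²·r_ind(V)] ≤ 1 − E[r_pool(V)]²·E[r_ind(V)]. -/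
open MeasureTheory

lemma cheb_assoc {Ω : Type*} [MeasurableSpace Ω] (μ : Measure Ω) [IsProbabilityMeasure μ]
    (V : Ω → ℝ) (hV : Measurable V) (F G : ℝ → ℝ)
    (hF : Measurable F) (hG : Measurable G)
    (hF01 : ∀ x, F x ∈ Set.Icc (0:ℝ) 1) (hG01 : ∀ x, G x ∈ Set.Icc (0:ℝ) 1)
    (hFm : Monotone F) (hGm : Monotone G) :
    (∫ ω, F (V ω) ∂μ) * (∫ ω, G (V ω) ∂μ) ≤ ∫ ω, F (V ω) * G (V ω) ∂μ := by
  set f : Ω → ℝ := fun ω => F (V ω) with hf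
  set g : Ω → ℝ := fun ω => G (V ω) with hg
  have hfm : Measurable f := hF.comp hV
  have hgm : Measurable g := hG.comp hV
  have hfb : ∀ ω, |f ω| ≤ 1 := fun ω => by
    have h := hF01 (V ω); rw [abs_le]; constructor <;> [linarith [h.1]; exact h.2]
  have hgb : ∀ ω, |g ω| ≤ 1 := fun ω => by
    have h := hG01 (V ω); rw [abs_le]; constructor <;> [linarith [h.1]; exact h.2]
  -- helper: integrability of products on the product measure
  have key : ∀ (u v : Ω → ℝ), Measurable u → Measurable v → (∀ ω, |u ω| ≤ 1) →
      (∀ ω, |v ω| ≤ 1) → Integrable (fun z : Ω × Ω => u z.1 * v z.2) (μ.prod μ) := by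
    intro u v hu hv hub hvb
    refine Integrable.mono' (integrable_const 1)
      ((hu.comp measurable_fst).mul (hv.comp measurable_snd)).aestronglyMeasurable
      (Filter.Eventually.of_forall fun z => ?_)
    calc |u z.1 * v z.2| = |u z.1| * |v z.2| := abs_mul _ _
      _ ≤ 1 * 1 := mul_le_mul (hub _) (hvb _) (abs_nonneg _) zero_le_one
      _ = 1 := one_mul 1
  have h1b : ∀ ω : Ω, |(1:ℝ)| ≤ 1 := fun _ => le_of_eq (abs_one)
  set fg : Ω → ℝ := fun ω => f ω * g ω with hfgdef
  set one : Ω → ℝ := fun _ => (1:ℝ) with honedef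
  have hfgm : Measurable fg := hfm.mul hgm
  have hfgb : ∀ ω, |fg ω| ≤ 1 := fun ω => by
    calc |f ω * g ω| = |f ω| * |g ω| := abs_mul _ _
      _ ≤ 1 * 1 := mul_le_mul (hfb _) (hgb _) (abs_nonneg _) zero_le_one
      _ = 1 := one_mul 1
  have I1 := key fg one hfgm measurable_const hfgb h1b
  have I2 := key one fg measurable_const hfgm h1b hfgb
  have I3 := key f g hfm hgm hfb hgb
  have I4 := key g f hgm hfm hgb hfb
  have hnn : 0 ≤ ∫ z : Ω × Ω, (f z.1 - f z.2) * (g z.1 - g z.2) ∂(μ.prod μ) := by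
    refine integral_nonneg fun z => ?_
    simp only [Pi.zero_apply]
    rcases le_total (V z.1) (V z.2) with h | h
    · have h1 : f z.1 ≤ f z.2 := hFm h
      have h2 : g z.1 ≤ g z.2 := hGm h
      nlinarith [mul_nonneg (sub_nonneg.2 h1) (sub_nonneg.2 h2)]
    · have h1 : f z.2 ≤ f z.1 := hFm h
      have h2 : g z.2 ≤ g z.1 := hGm h
      exact mul_nonneg (by linarith) (by linarith)
  have hexp : (fun z : Ω × Ω => (f z.1 - f z.2) * (g z.1 - g z.2)) =
      fun z => (fg z.1 * one z.2 + one z.1 * fg z.2) - (f z.1 * g z.2 + g z.1 * f z.2) := by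
    funext z; simp only [hfgdef, honedef]; ring
  rw [hexp] at hnn
  have E := integral_sub (I1.add I2) (I3.add I4)
  simp only [Pi.add_apply] at E
  rw [E, integral_add I1 I2, integral_add I3 I4,
    integral_prod_mul, integral_prod_mul, integral_prod_mul, integral_prod_mul] at hnn
  have hone : ∫ ω, one ω ∂μ = 1 := by
    simp [honedef]
  rw [hone] at hnn
  have hfg : ∫ ω, fg ω ∂μ = ∫ ω, F (V ω) * G (V ω) ∂μ := rfl
  have hff : ∫ ω, f ω ∂μ = ∫ ω, F (V ω) ∂μ := rfl
  have hgg : ∫ ω, g ω ∂μ = ∫ ω, G (V ω) ∂μ := rfl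
  rw [hfg, hff, hgg] at hnn
  linarith

/-- Theorem 1, square array case: the probability that a true positive sample is declared
negative under the correlated-errors model, `1 − E[r_pool(V)²·r_ind(V)]`, is at most the
corresponding probability `1 − E[r_pool(V)]²·E[r_ind(V)]` under the model with unconditionally
independent test errors. -/
theorem square_array_false_negative_correlated_le_independent
    {Ω : Type*} [MeasurableSpace Ω] (μ : Measure Ω) [IsProbabilityMeasure μ]
    (V : Ω → ℝ) (hV : Measurable V)
    (r_pool r_ind : ℝ → ℝ)
    (hpool_meas : Measurable r_pool) (hind_meas : Measurable r_ind)
    (hpool_range : ∀ x, r_pool x ∈ Set.Icc (0 : ℝ) 1)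
    (hind_range : ∀ x, r_ind x ∈ Set.Icc (0 : ℝ) 1)
    (hpool_mono : Monotone r_pool) (hind_mono : Monotone r_ind) :
    1 - (∫ ω, (r_pool (V ω)) ^ 2 * r_ind (V ω) ∂μ) ≤
      1 - (∫ ω, r_pool (V ω) ∂μ) ^ 2 * (∫ ω, r_ind (V ω) ∂μ) := by
  have hsq_range : ∀ x, (r_pool x) ^ 2 ∈ Set.Icc (0:ℝ) 1 := fun x => by
    have h := hpool_range x
    exact ⟨sq_nonneg _, by nlinarith [h.1, h.2]⟩
  have hsq_mono : Monotone (fun x => (r_pool x) ^ 2) := fun a b hab =>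
    pow_le_pow_left₀ (hpool_range a).1 (hpool_mono hab) 2
  have h1 := cheb_assoc μ V hV (fun x => (r_pool x) ^ 2) r_ind
    (hpool_meas.pow_const 2) hind_meas hsq_range hind_range hsq_mono hind_mono
  have h2sq := cheb_assoc μ V hV r_pool r_pool hpool_meas hpool_meas
    hpool_range hpool_range hpool_mono hpool_mono
  have h2 : (∫ ω, r_pool (V ω) ∂μ) ^ 2 ≤ ∫ ω, (r_pool (V ω)) ^ 2 ∂μ := by
    rw [sq]
    calc (∫ ω, r_pool (V ω) ∂μ) * (∫ ω, r_pool (V ω) ∂μ)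
        ≤ ∫ ω, r_pool (V ω) * r_pool (V ω) ∂μ := h2sq
      _ = ∫ ω, (r_pool (V ω)) ^ 2 ∂μ := by congr 1; funext ω; ring
  have hind_nn : 0 ≤ ∫ ω, r_ind (V ω) ∂μ :=
    integral_nonneg fun ω => (hind_range (V ω)).1
  have : (∫ ω, r_pool (V ω) ∂μ) ^ 2 * (∫ ω, r_ind (V ω) ∂μ) ≤
      ∫ ω, (r_pool (V ω)) ^ 2 * r_ind (V ω) ∂μ :=
    le_trans (mul_le_mul_of_nonneg_right h2 hind_nn) h1
  linarith
end

section
/- Fix an integer n ≥ 1, reals p ∈ [0,1] and q ≥ 0, and a function γ : ℕ × ℕ → ℝ with 0 ≤ γ(k,d) ≤ 1 for all k, d. Define f̃(k) = q·Σ_{d=0}^{k−1} (1 − γ(k,d))·(k−d)·C(k,d)·p^d·(1−p)^{k−d}. Then the sequence N ↦ (⌊N/n⌋·f̃(n) + f̃(N − n·⌊N/n⌋)) / N converges, as N → ∞, to q·(1−p)·Σ_{d=0}^{n−1} (1 − γ(n,d))·C(n−1,d)·p^d·(1−p)^{n−1−d}. -/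
/-!
The identity `(k - d) C(k, d) = k C(k - 1, d)` turns the expected number of false positives of
one full pool into `f̃(n) = n · L`, where `L` is the claimed limit. Of the `N` people, the
`⌊N/n⌋` full pools contribute `⌊N/n⌋ f̃(n) / N → f̃(n) / n = L`, while the single leftover pool
has fewer than `n` members, so `f̃` of its size takes finitely many values and its share
tends to `0`.
-/

open Filter Topology Finset

theorem sub_mul_choose_eq_mul_choose_pred {n : ℕ} (hn : 0 < n) (d : ℕ) :
    (n - d) * n.choose d = n * (n - 1).choose d := by
  obtain ⟨m, rfl⟩ := Nat.exists_eq_add_of_lt hn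
  simpa [mul_comm] using (Nat.choose_mul_succ_eq m d).symm

theorem sum_sub_mul_choose_mul_pow_eq {R : Type*} [CommSemiring R] {n : ℕ} (hn : 0 < n)
    (a : ℕ → R) (x y : R) :
    ∑ d ∈ range n, a d * ((n - d : ℕ) : R) * (n.choose d : R) * x ^ d * y ^ (n - d)
      = n * (y * ∑ d ∈ range n, a d * ((n - 1).choose d : R) * x ^ d * y ^ (n - 1 - d)) := by
  rw [mul_sum, mul_sum]
  refine sum_congr rfl fun d hd => ?_
  have hchoose : ((n - d : ℕ) : R) * n.choose d = n * (n - 1).choose d := by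
    simpa only [Nat.cast_mul] using congrArg (Nat.cast : ℕ → R)
      (sub_mul_choose_eq_mul_choose_pred hn d)
  have hpow : y ^ (n - d) = y * y ^ (n - 1 - d) := by
    rw [← pow_succ']; congr 1; have := mem_range.mp hd; omega
  rw [hpow, mul_assoc (a d), hchoose]
  ring

theorem tendsto_natCast_div_div_natCast_atTop (n : ℕ) :
    Tendsto (fun N : ℕ => ((N / n : ℕ) : ℝ) / N) atTop (𝓝 (1 / n)) := by
  rcases n.eq_zero_or_pos with rfl | hn
  · simp
  have hfloor : Tendsto (fun N : ℕ => (⌊(N : ℝ) / n⌋₊ : ℝ) / (N / n) / n) atTop (𝓝 (1 / n)) :=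
    (tendsto_nat_floor_div_atTop.comp <|
      tendsto_natCast_atTop_atTop.atTop_div_const (by positivity)).div_const _
  refine hfloor.congr fun N => ?_
  rw [Nat.floor_div_eq_div, div_div, div_mul_cancel₀ _ (by positivity)]

theorem tendsto_apply_mod_div_natCast_atTop {n : ℕ} (hn : 0 < n) (f : ℕ → ℝ) :
    Tendsto (fun N : ℕ => f (N % n) / N) atTop (𝓝 0) := by
  have hfinite : (Set.range fun N => ‖f (N % n)‖).Finite :=
    ((Set.finite_Iio n).image (‖f ·‖)).subset <| by
      rintro _ ⟨N, rfl⟩; exact ⟨N % n, Nat.mod_lt N hn, rfl⟩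
  exact isBoundedUnder_le_mul_tendsto_zero hfinite.bddAbove.isBoundedUnder_of_range
    (tendsto_inv_atTop_zero.comp tendsto_natCast_atTop_atTop)

theorem tendsto_div_add_apply_sub_div_natCast_atTop {n : ℕ} (hn : 0 < n) (f : ℕ → ℝ) :
    Tendsto (fun N : ℕ => ((N / n : ℕ) * f n + f (N - n * (N / n))) / (N : ℝ)) atTop
      (𝓝 (f n / n)) := by
  have hlim := ((tendsto_natCast_div_div_natCast_atTop n).mul_const (f n)).add
    (tendsto_apply_mod_div_natCast_atTop hn f)
  rw [one_div_mul_eq_div, add_zero] at hlim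
  refine hlim.congr fun N => ?_
  rw [← Nat.mod_eq_sub_mul_div, add_div, div_mul_eq_mul_div]

theorem linear_array_false_positives_per_person_general
    (n : ℕ) (hn : 1 ≤ n) (p : ℝ) (q : ℝ)
    (γ : ℕ → ℕ → ℝ)
    (ftil : ℕ → ℝ)
    (hftil : ∀ k, ftil k = q * ∑ d ∈ Finset.range k,
      (1 - γ k d) * ((k - d : ℕ) : ℝ) * (k.choose d : ℝ) * p ^ d * (1 - p) ^ (k - d)) :
    Tendsto
      (fun N : ℕ => ((N / n : ℕ) * ftil n + ftil (N - n * (N / n))) / (N : ℝ))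
      atTop
      (nhds (q * (1 - p) * ∑ d ∈ Finset.range n,
        (1 - γ n d) * ((n - 1).choose d : ℝ) * p ^ d * (1 - p) ^ (n - 1 - d))) := by
  have hpool : ftil n / n = q * (1 - p) * ∑ d ∈ Finset.range n,
      (1 - γ n d) * ((n - 1).choose d : ℝ) * p ^ d * (1 - p) ^ (n - 1 - d) := by
    rw [hftil, sum_sub_mul_choose_mul_pow_eq hn (fun d => 1 - γ n d) p (1 - p)]
    field_simp
  simpa only [hpool] using tendsto_div_add_apply_sub_div_natCast_atTop hn ftil

/-- Expected number of false positives per person for linear array group testing: the total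
expected number of false positives `⌊N/n⌋·f̃(n) + f̃(N − n⌊N/n⌋)`, divided by `N`, converges as
`N → ∞` to `q·(1−p)·Σ_{d=0}^{n−1} (1 − γ(n,d))·C(n−1,d)·p^d·(1−p)^{n−1−d}`. -/
theorem linear_array_false_positives_per_person
    (n : ℕ) (hn : 1 ≤ n) (p : ℝ) (hp0 : 0 ≤ p) (hp1 : p ≤ 1) (q : ℝ) (hq : 0 ≤ q)
    (γ : ℕ → ℕ → ℝ) (hγ : ∀ k d, 0 ≤ γ k d ∧ γ k d ≤ 1)
    (ftil : ℕ → ℝ)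
    (hftil : ∀ k, ftil k = q * ∑ d ∈ Finset.range k,
      (1 - γ k d) * ((k - d : ℕ) : ℝ) * (k.choose d : ℝ) * p ^ d * (1 - p) ^ (k - d)) :
    Tendsto
      (fun N : ℕ => ((N / n : ℕ) * ftil n + ftil (N - n * (N / n))) / (N : ℝ))
      atTop
      (nhds (q * (1 - p) * ∑ d ∈ Finset.range n,
        (1 - γ n d) * ((n - 1).choose d : ℝ) * p ^ d * (1 - p) ^ (n - 1 - d))) :=
  linear_array_false_positives_per_person_general n hn p q γ ftil hftil
end
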